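/- Assume κ^{<κ} = κ with κ > ω. For any open set U ⊆ κ^κ and any family (X_i)_{i<κ} of dense open subsets of κ^κ, there exists η ∈ U ∩ ⋂_{i<κ} X_i such that the set {α < κ | η(α) > 0} does not contain an ω-cub subset of κ; in fact {α | η(α) = 0} contains a set closed under suprema of increasing ω-sequences that is unbounded in κ. -/

import Mathlib

/-!
The generic `η` is the union of a `κ`-chain of basic open sets `N(a_i, p_i)`. Stage `i` first
sets `η (b_i) = 0` at the least `b_i` above `a₀` and all earlier lengths `a_j`, and then
shrinks into `X_i` by density. Regularity of `κ` (which follows from `κ^{<κ} = κ`) keeps every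
`b_i` below `κ`. The map `i ↦ b_i` is normal, so its range is a club of zeros of `η`; as
`cf κ > ω`, an ω-sequence alternating between this club and any ω-cub set has its supremum in
both, so no ω-cub set avoids the zeros of `η`.
-/

open Cardinal Ordinal Set Topology
noncomputable section

/-- The generalized Baire space `κ^κ`, realized on the canonical type of order type `κ.ord`. -/
abbrev GBS (κ : Cardinal) : Type := κ.ord.ToType → κ.ord.ToType

/-- Basic open sets `N_η = {f | η ⊆ f}`, for `η` a function defined on an initial
segment `{i | i < b}` (these are exactly the ordinals `α < κ`). -/
def GBaireBasic (κ : Cardinal) : Set (Set (GBS κ)) :=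
  {N | ∃ (b : κ.ord.ToType) (η : κ.ord.ToType → κ.ord.ToType),
        N = {f : GBS κ | ∀ i, i < b → f i = η i}}

/-- The bounded topology on the generalized Baire space. -/
def gbTop (κ : Cardinal) : TopologicalSpace (GBS κ) :=
  TopologicalSpace.generateFrom (GBaireBasic κ)

/-- `X ⊆ κ` is ω-cub: unbounded and closed under suprema of ω-sequences from `X`. -/
def OmegaCub (κ : Cardinal) (X : Set κ.ord.ToType) : Prop :=
  (∀ a : κ.ord.ToType, ∃ x ∈ X, a < x) ∧
  (∀ f : ℕ → κ.ord.ToType, (∀ n, f n ∈ X) → ∀ y, IsLUB (Set.range f) y → y ∈ X)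

theorem exists_gt_of_mk_lt_cof {α : Type*} [LinearOrder α] {s : Set α}
    (hs : #s < Order.cof α) : ∃ x, ∀ y ∈ s, y < x :=
  not_isCofinal_iff.1 fun h => (Order.cof_le h).not_gt hs

theorem bddAbove_range_of_aleph0_lt_cof {α : Type*} [LinearOrder α] (h : ℵ₀ < Order.cof α)
    (f : ℕ → α) : BddAbove (range f) :=
  have ⟨x, hx⟩ := exists_gt_of_mk_lt_cof
    ((mk_le_aleph0_iff.2 (countable_range f).to_subtype).trans_lt h)
  ⟨x, fun y hy => (hx y hy).le⟩

theorem Cardinal.isRegular_of_powerlt_self {κ : Cardinal} (hκ : ℵ₀ ≤ κ) (h : κ ^< κ = κ) :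
    κ.IsRegular :=
  ⟨hκ, not_lt.1 fun hlt =>
    ((lt_power_cof_ord hκ).trans_le ((le_powerlt κ hlt).trans h.le)).false⟩

theorem Cardinal.IsRegular.cof_toType_ord {κ : Cardinal} (hκ : κ.IsRegular) :
    Order.cof κ.ord.ToType = κ := by
  rw [cof_toType, hκ.cof_ord]

section WellOrder

variable {α : Type*} [LinearOrder α] [WellFoundedLT α]

theorem exists_isLUB_of_bddAbove {s : Set α} (hs : BddAbove s) (hne : s.Nonempty) :
    ∃ y, IsLUB s y := by
  have : Nonempty α := ⟨hne.some⟩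
  let := WellFoundedLT.toOrderBot α
  let := WellFoundedLT.conditionallyCompleteLinearOrderBot α
  exact ⟨sSup s, isLUB_csSup hne hs⟩

/-- The supremum of an ω-sequence alternating between `s` and `t` lies in both. -/
theorem DirSupClosed.inter_nonempty [Nonempty α] (hbdd : ∀ f : ℕ → α, BddAbove (range f))
    {s t : Set α} (hs : DirSupClosed s) (hs_unbdd : ∀ a, ∃ x ∈ s, a < x)
    (ht : ∀ f : ℕ → α, (∀ n, f n ∈ t) → ∀ y, IsLUB (range f) y → y ∈ t)
    (ht_unbdd : ∀ a, ∃ x ∈ t, a < x) : (s ∩ t).Nonempty := by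
  choose up hup_mem hup_lt using hs_unbdd
  choose ut hut_mem hut_lt using ht_unbdd
  let w : ℕ → α := fun n => Nat.rec (ut (Classical.arbitrary α)) (fun _ x => ut (up x)) n
  have hw_mem : ∀ n, w n ∈ t := fun n => by cases n <;> exact hut_mem _
  have hw_lt : ∀ n, up (w n) < w (n + 1) := fun n => hut_lt _
  obtain ⟨y, hy⟩ := exists_isLUB_of_bddAbove (hbdd w) (range_nonempty w)
  have hub : upperBounds (range (up ∘ w)) = upperBounds (range w) := by
    ext z
    simp only [mem_upperBounds, forall_mem_range, Function.comp_apply]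
    exact ⟨fun h n => (hup_lt _).le.trans (h n), fun h n => (hw_lt n).le.trans (h (n + 1))⟩
  have hy' : IsLUB (range (up ∘ w)) y := by
    unfold IsLUB
    rwa [hub]
  refine ⟨y, hs ?_ (range_nonempty _) (DirectedOn.of_linearOrder _) hy', ht w hw_mem y hy⟩
  rintro _ ⟨n, rfl⟩
  exact hup_mem _

end WellOrder


/-- The basic open set of all functions extending the partial function `c.2 ↾ {i | i < c.1}`. -/
def cyl {α : Type*} [LT α] (c : α × (α → α)) : Set (α → α) := {f | ∀ i, i < c.1 → f i = c.2 i}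

theorem mem_cyl_self {α : Type*} [LT α] (c : α × (α → α)) : c.2 ∈ cyl c := fun _ _ => rfl

theorem cyl_subset_cyl {α : Type*} [Preorder α] {a b : α} (hab : a ≤ b) (p : α → α) :
    cyl (b, p) ⊆ cyl (a, p) :=
  fun _ hf i hi => hf i (hi.trans_le hab)

/-- A strategy for building a generic function by transfinite recursion: start inside
`cyl base`, and at stage `i` shrink the current basic set `cyl c` to `cyl (extend i c)`. -/
structure ExtensionScheme (α : Type*) [Preorder α] where
  base : α × (α → α)
  extend : α → α × (α → α) → α × (α → α)
  le_extend_fst : ∀ i c, c.1 ≤ (extend i c).1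
  cyl_extend_subset : ∀ i c, cyl (extend i c) ⊆ cyl c

namespace ExtensionScheme

variable {α : Type*} [ConditionallyCompleteLinearOrderBot α] (S : ExtensionScheme α)

/-- Where a new zero is placed, given the stages `h j` built so far (unbuilt ones are `⊥`). -/
def bound (h : α → α × (α → α)) : α := sInf {x | S.base.1 ≤ x ∧ ∀ j, (h j).1 ≤ x}

open scoped Classical in
/-- The union of the partial functions `h j`, falling back to the base outside their domains. -/
def glue (h : α → α × (α → α)) (t : α) : α :=
  if ∃ j, t < (h j).1 then (h (sInf {j | t < (h j).1})).2 t else S.base.2 t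

theorem glue_eq_of_isLeast {h : α → α × (α → α)} {t j : α} (hj : IsLeast {k | t < (h k).1} j) :
    S.glue h t = (h j).2 t := by
  rw [glue, if_pos ⟨j, hj.1⟩, hj.csInf_eq]

theorem glue_eq_of_forall_le {h : α → α × (α → α)} {t : α} (ht : ∀ k, (h k).1 ≤ t) :
    S.glue h t = S.base.2 t := by
  rw [glue, if_neg]
  simpa using ht

variable [WellFoundedLT α] [SuccOrder α]

def stage : α → α × (α → α) :=
  wellFounded_lt.fix fun i rec =>
    let h := fun j => if hj : j < i then rec j hj else ⊥
    S.extend i (Order.succ (S.bound h), Function.update (S.glue h) (S.bound h) ⊥)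

def before (i : α) : α → α × (α → α) := fun j => if j < i then S.stage j else ⊥

def point (i : α) : α := S.bound (S.before i)

def limit : α → α := S.glue S.stage

theorem stage_eq (i : α) :
    S.stage i = S.extend i (Order.succ (S.point i),
      Function.update (S.glue (S.before i)) (S.point i) ⊥) :=
  wellFounded_lt.fix_eq _ i

theorem lt_before_fst {i j t : α} : t < (S.before i j).1 ↔ j < i ∧ t < (S.stage j).1 := by
  unfold before
  split_ifs with hj
  · exact (and_iff_right hj).symm
  · simp [hj]

theorem point_le {i x : α} (h₀ : S.base.1 ≤ x) (h : ∀ j < i, (S.stage j).1 ≤ x) :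
    S.point i ≤ x := by
  refine csInf_le' ⟨h₀, fun j => ?_⟩
  unfold before
  split_ifs with hj
  exacts [h j hj, bot_le]

theorem nonempty_bound_before (hsmall : ∀ i : α, #(Iio i) < Order.cof α) (i : α) :
    {x | S.base.1 ≤ x ∧ ∀ j, (S.before i j).1 ≤ x}.Nonempty := by
  obtain ⟨x, hx⟩ := exists_gt_of_mk_lt_cof (mk_image_le.trans_lt (hsmall i))
  refine ⟨max S.base.1 x, le_max_left _ _, fun j => ?_⟩
  unfold before
  split_ifs with hj
  exacts [(hx _ (mem_image_of_mem (fun j => (S.stage j).1) hj)).le.trans (le_max_right _ _),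
    bot_le]

theorem base_fst_le_point (hsmall : ∀ i : α, #(Iio i) < Order.cof α) (i : α) :
    S.base.1 ≤ S.point i :=
  (csInf_mem (S.nonempty_bound_before hsmall i)).1

theorem stage_fst_le_point (hsmall : ∀ i : α, #(Iio i) < Order.cof α) {i j : α} (hji : j < i) :
    (S.stage j).1 ≤ S.point i := by
  have := (csInf_mem (S.nonempty_bound_before hsmall i)).2 j
  rwa [before, if_pos hji] at this

theorem stage_snd_mem_cyl (i : α) : (S.stage i).2 ∈
    cyl (Order.succ (S.point i), Function.update (S.glue (S.before i)) (S.point i) ⊥) := by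
  rw [stage_eq]
  exact S.cyl_extend_subset _ _ (mem_cyl_self _)

variable [NoMaxOrder α]

theorem stage_snd_point (i : α) : (S.stage i).2 (S.point i) = ⊥ := by
  simpa using S.stage_snd_mem_cyl i (S.point i) (Order.lt_succ _)

theorem stage_snd_of_lt_point {i t : α} (ht : t < S.point i) :
    (S.stage i).2 t = S.glue (S.before i) t := by
  rw [S.stage_snd_mem_cyl i t (ht.trans (Order.lt_succ _))]
  exact Function.update_of_ne ht.ne _ _

theorem point_lt_stage_fst (i : α) : S.point i < (S.stage i).1 := by
  rw [stage_eq]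
  exact (Order.lt_succ _).trans_le (S.le_extend_fst i (_, _))

theorem isNormal_point (hsmall : ∀ i : α, #(Iio i) < Order.cof α) : Order.IsNormal S.point := by
  have hlt {j i : α} (hji : j < i) : S.point j < S.point i :=
    (S.point_lt_stage_fst j).trans_le (S.stage_fst_le_point hsmall hji)
  refine Order.isNormal_iff.2
    ⟨fun j i hji => hlt hji, fun i hi x hx => S.point_le ?_ fun j hj => ?_⟩
  · obtain ⟨j, hj⟩ := not_isMin_iff.1 hi.not_isMin
    exact (S.base_fst_le_point hsmall j).trans (hx j hj)
  · exact (S.stage_fst_le_point hsmall (Order.lt_succ j)).trans (hx _ (hi.succ_lt hj))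

theorem exists_isLeast_lt_stage_fst (hsmall : ∀ i : α, #(Iio i) < Order.cof α) (t : α) :
    ∃ j, IsLeast {k | t < (S.stage k).1} j :=
  ⟨_, isLeast_csInf ⟨t, (S.isNormal_point hsmall).strictMono.le_apply.trans_lt
    (S.point_lt_stage_fst t)⟩⟩

theorem limit_eq_stage_snd (hsmall : ∀ i : α, #(Iio i) < Order.cof α) {i t : α}
    (ht : t < (S.stage i).1) : S.limit t = (S.stage i).2 t := by
  obtain ⟨j, hj⟩ := S.exists_isLeast_lt_stage_fst hsmall t
  rw [limit, S.glue_eq_of_isLeast hj]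
  rcases (hj.2 ht).lt_or_eq with hji | rfl
  · have htj : t < S.point i := hj.1.trans_le (S.stage_fst_le_point hsmall hji)
    have hj' : IsLeast {k | t < (S.before i k).1} j :=
      ⟨S.lt_before_fst.2 ⟨hji, hj.1⟩, fun k hk => hj.2 (S.lt_before_fst.1 hk).2⟩
    rw [S.stage_snd_of_lt_point htj, S.glue_eq_of_isLeast hj', before, if_pos hji]
  · rfl

theorem limit_mem_cyl_stage (hsmall : ∀ i : α, #(Iio i) < Order.cof α) (i : α) :
    S.limit ∈ cyl (S.stage i) :=
  fun _ ht => S.limit_eq_stage_snd hsmall ht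

theorem limit_mem_cyl_base (hsmall : ∀ i : α, #(Iio i) < Order.cof α) :
    S.limit ∈ cyl S.base := by
  intro t ht
  obtain ⟨j, hj⟩ := S.exists_isLeast_lt_stage_fst hsmall t
  rw [limit, S.glue_eq_of_isLeast hj,
    S.stage_snd_of_lt_point (ht.trans_le (S.base_fst_le_point hsmall j))]
  refine S.glue_eq_of_forall_le fun k => not_lt.1 fun hk => ?_
  obtain ⟨hkj, htk⟩ := S.lt_before_fst.1 hk
  exact (hj.2 htk).not_gt hkj

theorem limit_point (hsmall : ∀ i : α, #(Iio i) < Order.cof α) (i : α) :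
    S.limit (S.point i) = ⊥ := by
  rw [S.limit_eq_stage_snd hsmall (S.point_lt_stage_fst i), S.stage_snd_point]

theorem exists_point_gt (hsmall : ∀ i : α, #(Iio i) < Order.cof α) (a : α) :
    ∃ x ∈ range S.point, a < x :=
  have ⟨a', ha'⟩ := exists_gt a
  ⟨_, mem_range_self a', ha'.trans_le (S.isNormal_point hsmall).strictMono.le_apply⟩

end ExtensionScheme

section GeneralizedBaireSpace

variable {κ : Cardinal}

theorem isOpen_cyl (c : κ.ord.ToType × GBS κ) : IsOpen[gbTop κ] (cyl c) :=
  TopologicalSpace.GenerateOpen.basic _ ⟨c.1, c.2, rfl⟩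

theorem exists_cyl_subset_of_isOpen [Nonempty κ.ord.ToType] {V : Set (GBS κ)}
    (hV : IsOpen[gbTop κ] V) {g : GBS κ} (hg : g ∈ V) : ∃ b, cyl (b, g) ⊆ V := by
  induction hV generalizing g with
  | basic N hN =>
    obtain ⟨b, η, rfl⟩ := hN
    exact ⟨b, fun f hf i hi => (hf i hi).trans (hg i hi)⟩
  | univ => exact ⟨Classical.arbitrary _, subset_univ _⟩
  | inter s t _ _ ihs iht =>
    obtain ⟨b₁, hb₁⟩ := ihs hg.1
    obtain ⟨b₂, hb₂⟩ := iht hg.2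
    exact ⟨max b₁ b₂, subset_inter ((cyl_subset_cyl (le_max_left _ _) g).trans hb₁)
      ((cyl_subset_cyl (le_max_right _ _) g).trans hb₂)⟩
  | sUnion 𝒮 _ ih =>
    obtain ⟨s, hs, hgs⟩ := hg
    obtain ⟨b, hb⟩ := ih s hs hgs
    exact ⟨b, hb.trans (subset_sUnion_of_mem hs)⟩

theorem exists_cyl_subset_cyl_inter [Nonempty κ.ord.ToType] {W : Set (GBS κ)}
    (hW : IsOpen[gbTop κ] W)
    (hW_dense : ∀ V : Set (GBS κ), IsOpen[gbTop κ] V → V.Nonempty → (V ∩ W).Nonempty)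
    (c : κ.ord.ToType × GBS κ) : ∃ c', c.1 ≤ c'.1 ∧ cyl c' ⊆ cyl c ∩ W := by
  let := gbTop κ
  obtain ⟨g, hg⟩ := hW_dense _ (isOpen_cyl c) ⟨_, mem_cyl_self c⟩
  obtain ⟨b, hb⟩ := exists_cyl_subset_of_isOpen ((isOpen_cyl c).inter hW) hg
  exact ⟨(max c.1 b, g), le_max_left _ _, (cyl_subset_cyl (le_max_right _ _) g).trans hb⟩

end GeneralizedBaireSpace

/-- Given a nonempty open `U` and `κ` many dense open sets `X i`, there is
`η ∈ U ∩ ⋂ i, X i` such that `{α | η α > 0}` contains no ω-cub set; in fact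
`{α | η α = 0}` contains an unbounded set closed under suprema of strictly
increasing ω-sequences. -/
theorem stmt_12 (κ : Cardinal) (hκ : ℵ₀ < κ) (h : κ ^< κ = κ)
    (U : Set (GBS κ)) (hU : IsOpen[gbTop κ] U) (hUne : U.Nonempty)
    (X : κ.ord.ToType → Set (GBS κ))
    (hX : ∀ i, IsOpen[gbTop κ] (X i) ∧
      (∀ V : Set (GBS κ), IsOpen[gbTop κ] V → V.Nonempty → (V ∩ X i).Nonempty)) :
    ∃ η ∈ U ∩ ⋂ i, X i,
      (¬ ∃ S : Set κ.ord.ToType, OmegaCub κ S ∧ S ⊆ {a | ∃ y, y < η a}) ∧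
      ∃ S : Set κ.ord.ToType, S ⊆ {a | IsMin (η a)} ∧
        (∀ a, ∃ x ∈ S, a < x) ∧
        (∀ f : ℕ → κ.ord.ToType, StrictMono f → (∀ n, f n ∈ S) →
          ∀ y, IsLUB (Set.range f) y → y ∈ S) := by
  have hcof := (Cardinal.isRegular_of_powerlt_self hκ.le h).cof_toType_ord
  have : Nonempty κ.ord.ToType :=
    Ordinal.nonempty_toType_iff.2 (ord_pos.2 (aleph0_pos.trans hκ)).ne'
  have : NoMaxOrder κ.ord.ToType := Cardinal.noMaxOrder hκ.le
  let := WellFoundedLT.toOrderBot κ.ord.ToType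
  let := WellFoundedLT.conditionallyCompleteLinearOrderBot κ.ord.ToType
  have hsmall (i : κ.ord.ToType) : #(Iio i) < Order.cof κ.ord.ToType := by
    rw [hcof]
    simpa using mk_Iio_lt i
  obtain ⟨g, hg⟩ := hUne
  obtain ⟨b, hb⟩ := exists_cyl_subset_of_isOpen hU hg
  choose e he using fun i => exists_cyl_subset_cyl_inter (hX i).1 (hX i).2
  let S : ExtensionScheme κ.ord.ToType :=
    ⟨(b, g), e, fun i c => (he i c).1, fun i c => (he i c).2.trans inter_subset_left⟩
  have hzero : range S.point ⊆ {a | IsMin (S.limit a)} := by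
    rintro _ ⟨i, rfl⟩
    show IsMin _
    rw [S.limit_point hsmall]
    exact isMin_bot
  have hclosed := (S.isNormal_point hsmall).dirSupClosed_range
  refine ⟨S.limit, ⟨hb (S.limit_mem_cyl_base hsmall), mem_iInter.2 fun i => ?_⟩, ?_,
    range S.point, hzero, S.exists_point_gt hsmall, fun f _ hf y hy =>
      hclosed (range_subset_iff.2 hf) (range_nonempty f) (DirectedOn.of_linearOrder _) hy⟩
  · have := S.limit_mem_cyl_stage hsmall i
    rw [S.stage_eq] at this
    exact ((he i _).2 this).2
  · rintro ⟨S', ⟨hS'_unbdd, hS'_closed⟩, hS'⟩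
    obtain ⟨y, hy, hy'⟩ := hclosed.inter_nonempty
      (bddAbove_range_of_aleph0_lt_cof (hcof.symm ▸ hκ)) (S.exists_point_gt hsmall)
      hS'_closed hS'_unbdd
    obtain ⟨z, hz⟩ := hS' hy'
    exact hz.not_ge (hzero hy hz.le)
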